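/- If σ is the symmetric matrix measure on [-1,1] induced from a matrix measure μ on [0,1] via σ([-x,x]) = μ([0,x²]), then the moments satisfy S^σ_{2n} = S^μ_n and S^σ_{2n-1} = 0, and the canonical moments satisfy U^σ_{2n-1} = (1/2) I_p and U^σ_{2n} = U^μ_n, whenever defined. -/

import Mathlib

open MeasureTheory Matrix

/-- A (normalized, nonnegative definite, symmetric) `p×p` matrix measure
supported on the interval `[c,d]`, represented by a finite nonnegative base
measure together with a symmetric positive semidefinite matrix density. -/
structure MatMeas (p : ℕ) (c d : ℝ) where
  base : Measure ℝ
  dens : ℝ → Matrix (Fin p) (Fin p) ℝ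
  finite : IsFiniteMeasure base
  supp : base (Set.Icc c d)ᶜ = 0
  symm : ∀ x, (dens x).IsSymm
  psd : ∀ x, (dens x).PosSemidef
  integrable : ∀ i j, Integrable (fun x => dens x i j) base
  normalized : ∀ i j, (∫ x, dens x i j ∂base) = (1 : Matrix (Fin p) (Fin p) ℝ) i j

/-- The `k`-th (matrix) moment `S_k = ∫ x^k dμ(x)` of a matrix measure. -/
noncomputable def mmoment {p : ℕ} {c d : ℝ} (μ : MatMeas p c d) (k : ℕ) :
    Matrix (Fin p) (Fin p) ℝ :=
  Matrix.of fun i j => ∫ x, x ^ k * μ.dens x i j ∂μ.base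

/-- The matrix `μ(A)` assigned to a Borel set by a matrix measure. -/
noncomputable def mmOf {p : ℕ} {c d : ℝ} (μ : MatMeas p c d) (A : Set ℝ) :
    Matrix (Fin p) (Fin p) ℝ :=
  Matrix.of fun i j => ∫ x in A, μ.dens x i j ∂μ.base

/-- The set of possible `k`-th moments of matrix measures on `[c,d]` whose
moments of order `1,…,k-1` are prescribed by `S`. -/
def kthMomentSet (p : ℕ) (c d : ℝ) (k : ℕ) (S : ℕ → Matrix (Fin p) (Fin p) ℝ) :
    Set (Matrix (Fin p) (Fin p) ℝ) :=
  { T | ∃ ν : MatMeas p c d, (∀ j, 1 ≤ j → j < k → mmoment ν j = S j) ∧ mmoment ν k = T }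

/-!
For every vector `v`, `A ↦ vᵀ σ(A) v` is an ordinary finite measure; the hypotheses say that it
is invariant under `x ↦ -x` and that its image under `x ↦ x²` is `A ↦ vᵀ μ(A) v`. Integrating
powers against these scalar measures gives `vᵀ S^σ_{2n-1} v = 0` and `vᵀ S^σ_{2n} v = vᵀ S^μ_n v`,
and a symmetric matrix is determined by its quadratic form.

Reflecting a measure on `[-1, 1]` negates its odd moments and keeps the even ones, so the set of
possible `(2n-1)`-st moments of `σ` is invariant under `T ↦ -T`; hence `Omin = -Omax`, and
`U^σ_{2n-1} = ½ I`. Folding a measure on `[-1, 1]` by `x ↦ x²`, and unfolding a measure on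
`[0, 1]` symmetrically along `±√t`, identify the possible `2n`-th moments of `σ` with the possible
`n`-th moments of `μ`. The extremal moments, and so the square roots `R'` and `Q`, coincide.
-/

open Set
open scoped MatrixOrder

section NegMeasure

variable {G E : Type*} [MeasurableSpace G] [InvolutiveNeg G] [MeasurableNeg G]
  [NormedAddCommGroup E] {μ : Measure G}

theorem integrable_measure_neg_iff {f : G → E} :
    Integrable f μ.neg ↔ Integrable (fun x => f (-x)) μ :=
  (MeasurableEquiv.neg G).measurableEmbedding.integrable_map_iff

theorem integral_measure_neg [NormedSpace ℝ E] (f : G → E) :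
    ∫ x, f x ∂μ.neg = ∫ x, f (-x) ∂μ :=
  (MeasurableEquiv.neg G).measurableEmbedding.integral_map f

instance isNegInvariant_add_neg (μ : Measure G) : (μ + μ.neg).IsNegInvariant :=
  ⟨by rw [Measure.neg_def, Measure.map_add _ _ measurable_neg, ← Measure.neg_def,
    ← Measure.neg_def, Measure.neg_neg, add_comm]⟩

theorem integral_add_neg_measure [NormedSpace ℝ E] {f : G → E} (hf : Integrable f (μ + μ.neg)) :
    ∫ x, f x ∂(μ + μ.neg) = ∫ x, (f x + f (-x)) ∂μ := by
  obtain ⟨hfμ, hfneg⟩ := integrable_add_measure.1 hf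
  rw [integral_add_measure hfμ hfneg, integral_measure_neg,
    integral_add hfμ (integrable_measure_neg_iff.1 hfneg)]

end NegMeasure

theorem add_neg_measure_compl_Icc {μ : Measure ℝ} {a : ℝ} (h : μ (Icc (-a) a)ᶜ = 0) :
    (μ + μ.neg) (Icc (-a) a)ᶜ = 0 := by
  rw [Measure.add_apply, Measure.neg_apply, Set.compl_neg, Set.neg_Icc, neg_neg, h, add_zero]

theorem Matrix.IsSymm.eq_of_dotProduct_mulVec_eq {n : Type*} [Fintype n] {A B : Matrix n n ℝ}
    (hA : A.IsSymm) (hB : B.IsSymm) (h : ∀ v, v ⬝ᵥ A *ᵥ v = v ⬝ᵥ B *ᵥ v) : A = B := by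
  have psd_sub : ∀ {M N : Matrix n n ℝ}, M.IsSymm → N.IsSymm →
      (∀ v, v ⬝ᵥ M *ᵥ v = v ⬝ᵥ N *ᵥ v) → (M - N).PosSemidef := fun hM hN h =>
    .of_dotProduct_mulVec_nonneg (isHermitian_iff_isSelfAdjoint.2 (hM.sub hN)) fun v => by
      simp [sub_mulVec, h]
  exact le_antisymm (le_iff.2 (psd_sub hB hA fun v => (h v).symm)) (le_iff.2 (psd_sub hA hB h))

section QuadraticForm

variable {X n : Type*} [MeasurableSpace X] [Fintype n] {m : Measure X} {F : X → Matrix n n ℝ}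

theorem integrable_dotProduct_mulVec (hF : ∀ i j, Integrable (fun x => F x i j) m) (v : n → ℝ) :
    Integrable (fun x => v ⬝ᵥ F x *ᵥ v) m := by
  simp only [dotProduct, mulVec, Finset.mul_sum]
  exact integrable_finsetSum _ fun i _ => integrable_finsetSum _ fun j _ =>
    ((hF i j).mul_const _).const_mul _

theorem integral_dotProduct_mulVec (hF : ∀ i j, Integrable (fun x => F x i j) m) (v : n → ℝ) :
    ∫ x, v ⬝ᵥ F x *ᵥ v ∂m = v ⬝ᵥ (of fun i j => ∫ x, F x i j ∂m) *ᵥ v := by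
  simp only [dotProduct, mulVec, of_apply, Finset.mul_sum]
  rw [integral_finsetSum _ fun i _ => integrable_finsetSum _ fun j _ =>
    ((hF i j).mul_const _).const_mul _]
  refine Finset.sum_congr rfl fun i _ => ?_
  rw [integral_finsetSum _ fun j _ => ((hF i j).mul_const _).const_mul _]
  simp only [integral_const_mul, integral_mul_const]

end QuadraticForm

theorem IsLeast.eq_neg_of_isGreatest {α : Type*} [AddCommGroup α] [PartialOrder α]
    [IsOrderedAddMonoid α] {s : Set α} {a b : α} (hs : ∀ x ∈ s, -x ∈ s) (ha : IsLeast s a)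
    (hb : IsGreatest s b) : a = -b :=
  le_antisymm (ha.2 (hs b hb.1)) (neg_le.1 (hb.2 (hs a ha.1)))

theorem Matrix.inv_mul_mul_inv_eq_half_of_mul_self {n : Type*} [Fintype n] [DecidableEq n]
    {R X : Matrix n n ℝ} (hR : IsUnit R) (hRR : R * R = X + X) :
    R⁻¹ * X * R⁻¹ = (1 / 2 : ℝ) • 1 := by
  have hX : X = (1 / 2 : ℝ) • (R * R) := by rw [hRR, ← two_smul ℝ X, smul_smul]; norm_num
  have hdet := (isUnit_iff_isUnit_det R).1 hR
  rw [hX, Matrix.mul_smul, Matrix.smul_mul, ← Matrix.mul_assoc, nonsing_inv_mul _ hdet,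
    Matrix.one_mul, mul_nonsing_inv _ hdet]

namespace MatMeas

variable {p : ℕ} {c d : ℝ}

lemma ae_mem_Icc (ν : MatMeas p c d) : ∀ᵐ x ∂ν.base, x ∈ Icc c d :=
  ae_iff.2 ν.supp

lemma integrable_pow_mul_dens (ν : MatMeas p c d) (k : ℕ) (i j : Fin p) :
    Integrable (fun x => x ^ k * ν.dens x i j) ν.base :=
  (ν.integrable i j).bdd_mul (by fun_prop) (c := max |c| |d| ^ k) (ν.ae_mem_Icc.mono fun x hx => by
    rw [Real.norm_eq_abs, abs_pow]
    exact pow_le_pow_left₀ (abs_nonneg x) (abs_le_max_abs_abs hx.1 hx.2) k)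

lemma dotProduct_dens_mulVec_nonneg (ν : MatMeas p c d) (v : Fin p → ℝ) (x : ℝ) :
    0 ≤ v ⬝ᵥ ν.dens x *ᵥ v := by
  simpa using (ν.psd x).dotProduct_mulVec_nonneg v

lemma isSymm_mmoment (ν : MatMeas p c d) (k : ℕ) : (mmoment ν k).IsSymm :=
  IsSymm.ext fun i j => by simp only [mmoment, of_apply, (ν.symm _).apply]

lemma dotProduct_mmoment_mulVec (ν : MatMeas p c d) (k : ℕ) (v : Fin p → ℝ) :
    v ⬝ᵥ mmoment ν k *ᵥ v = ∫ x, (v ⬝ᵥ ν.dens x *ᵥ v) * x ^ k ∂ν.base := by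
  have h := integral_dotProduct_mulVec (F := fun x => x ^ k • ν.dens x)
    (by simpa only [Matrix.smul_apply, smul_eq_mul] using ν.integrable_pow_mul_dens k) v
  simp only [Matrix.smul_apply, smul_eq_mul] at h
  rw [mmoment, ← h]
  simp only [smul_mulVec, dotProduct_smul, smul_eq_mul, mul_comm]

noncomputable def quadMeasure (ν : MatMeas p c d) (v : Fin p → ℝ) : Measure ℝ :=
  ν.base.withDensity fun x => ENNReal.ofReal (v ⬝ᵥ ν.dens x *ᵥ v)

lemma integrable_dotProduct_dens_mulVec (ν : MatMeas p c d) (v : Fin p → ℝ) :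
    Integrable (fun x => v ⬝ᵥ ν.dens x *ᵥ v) ν.base :=
  integrable_dotProduct_mulVec ν.integrable v

lemma quadMeasure_apply (ν : MatMeas p c d) (v : Fin p → ℝ) {A : Set ℝ} (hA : MeasurableSet A) :
    ν.quadMeasure v A = ENNReal.ofReal (v ⬝ᵥ mmOf ν A *ᵥ v) := by
  rw [quadMeasure, withDensity_apply _ hA, ← ofReal_integral_eq_lintegral_ofReal, mmOf,
    integral_dotProduct_mulVec fun i j => (ν.integrable i j).integrableOn]
  · exact (ν.integrable_dotProduct_dens_mulVec v).integrableOn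
  · exact .of_forall (ν.dotProduct_dens_mulVec_nonneg v)

lemma integral_quadMeasure (ν : MatMeas p c d) (v : Fin p → ℝ) (g : ℝ → ℝ) :
    ∫ x, g x ∂ν.quadMeasure v = ∫ x, (v ⬝ᵥ ν.dens x *ᵥ v) * g x ∂ν.base := by
  rw [quadMeasure, integral_withDensity_eq_integral_toReal_smul₀
    (ν.integrable_dotProduct_dens_mulVec v).aemeasurable.ennreal_ofReal
    (.of_forall fun _ => ENNReal.ofReal_lt_top)]
  simp only [ENNReal.toReal_ofReal (ν.dotProduct_dens_mulVec_nonneg v _), smul_eq_mul]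

lemma map_quadMeasure {c' d' : ℝ} {ν : MatMeas p c d} {ρ : MatMeas p c' d'} {φ : ℝ → ℝ}
    (hφ : Measurable φ) (h : ∀ A, MeasurableSet A → mmOf ν (φ ⁻¹' A) = mmOf ρ A)
    (v : Fin p → ℝ) : (ν.quadMeasure v).map φ = ρ.quadMeasure v :=
  Measure.ext fun A hA => by
    rw [Measure.map_apply hφ hA, quadMeasure_apply _ _ (hφ hA), quadMeasure_apply _ _ hA, h A hA]

theorem mmoment_eq_smul_of_mmOf_preimage {c' d' : ℝ} {ν : MatMeas p c d} {ρ : MatMeas p c' d'}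
    {φ : ℝ → ℝ} (hφ : Measurable φ) (h : ∀ A, MeasurableSet A → mmOf ν (φ ⁻¹' A) = mmOf ρ A)
    {k m : ℕ} {a : ℝ} (hpow : ∀ x, φ x ^ m = a * x ^ k) : mmoment ρ m = a • mmoment ν k := by
  refine (ρ.isSymm_mmoment m).eq_of_dotProduct_mulVec_eq ((ν.isSymm_mmoment k).smul a) fun v => ?_
  calc v ⬝ᵥ mmoment ρ m *ᵥ v = ∫ y, y ^ m ∂ρ.quadMeasure v := by
        rw [dotProduct_mmoment_mulVec, integral_quadMeasure]
    _ = ∫ x, a * x ^ k ∂ν.quadMeasure v := by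
        rw [← map_quadMeasure hφ h v, integral_map hφ.aemeasurable (by fun_prop)]
        simp only [hpow]
    _ = v ⬝ᵥ (a • mmoment ν k) *ᵥ v := by
        rw [integral_const_mul, smul_mulVec, dotProduct_smul, dotProduct_mmoment_mulVec,
          integral_quadMeasure, smul_eq_mul]

theorem mmoment_two_mul_of_mmOf_preimage_sq {c' d' : ℝ} {σ : MatMeas p c d} {μ : MatMeas p c' d'}
    (h : ∀ A, MeasurableSet A → mmOf σ ((fun t : ℝ => t ^ 2) ⁻¹' A) = mmOf μ A) (m : ℕ) :
    mmoment σ (2 * m) = mmoment μ m := by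
  simpa using (mmoment_eq_smul_of_mmOf_preimage (by fun_prop) h (a := 1)
    fun x => by rw [one_mul, pow_mul]).symm

theorem mmoment_eq_zero_of_odd {σ : MatMeas p c d}
    (h : ∀ A, MeasurableSet A → mmOf σ ((fun x : ℝ => -x) ⁻¹' A) = mmOf σ A) {k : ℕ}
    (hk : Odd k) : mmoment σ k = 0 := by
  have h' := mmoment_eq_smul_of_mmOf_preimage measurable_neg h (a := -1)
    fun x => by rw [hk.neg_pow, neg_one_mul]
  rw [neg_one_smul] at h'
  have h2 : (2 : ℝ) • mmoment σ k = 0 := by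
    rw [two_smul]; nth_rw 2 [h']; exact add_neg_cancel _
  exact (smul_eq_zero.1 h2).resolve_left two_ne_zero

noncomputable def reflect {a : ℝ} (ν : MatMeas p (-a) a) : MatMeas p (-a) a where
  base := ν.base.neg
  dens x := ν.dens (-x)
  finite := have := ν.finite; Measure.isFiniteMeasure_map _ _
  supp := by rw [Measure.neg_apply, Set.compl_neg, Set.neg_Icc, neg_neg]; exact ν.supp
  symm x := ν.symm (-x)
  psd x := ν.psd (-x)
  integrable i j := integrable_measure_neg_iff.2 (by simpa using ν.integrable i j)
  normalized i j := by simpa [integral_measure_neg] using ν.normalized i j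

lemma mmoment_reflect {a : ℝ} (ν : MatMeas p (-a) a) (k : ℕ) :
    mmoment ν.reflect k = (-1 : ℝ) ^ k • mmoment ν k := by
  ext i j
  change ∫ x, x ^ k * ν.dens (-x) i j ∂ν.base.neg = (-1) ^ k * ∫ x, x ^ k * ν.dens x i j ∂ν.base
  rw [integral_measure_neg, ← integral_const_mul]
  congr 1 with x
  rw [neg_neg, neg_pow, mul_assoc]

theorem neg_mem_kthMomentSet {a : ℝ} {k : ℕ} (hk : Odd k) {S : ℕ → Matrix (Fin p) (Fin p) ℝ}
    (hS : ∀ j, Odd j → S j = 0) {T : Matrix (Fin p) (Fin p) ℝ}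
    (hT : T ∈ kthMomentSet p (-a) a k S) : -T ∈ kthMomentSet p (-a) a k S := by
  obtain ⟨ν, hmom, rfl⟩ := hT
  refine ⟨ν.reflect, fun j hj1 hjk => ?_, by rw [mmoment_reflect, hk.neg_one_pow, neg_one_smul]⟩
  rw [mmoment_reflect, hmom j hj1 hjk]
  rcases j.even_or_odd with hj | hj
  · rw [hj.neg_one_pow, one_smul]
  · rw [hS j hj, smul_zero]

theorem exists_measurable_dens (ν : MatMeas p c d) :
    ∃ ν' : MatMeas p c d, (∀ i j, Measurable fun x => ν'.dens x i j) ∧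
      ∀ k, mmoment ν' k = mmoment ν k := by
  choose g hg hνg using fun i j => (ν.integrable i j).aemeasurable
  obtain ⟨N, hbad, hN, hN0⟩ := exists_measurable_superset_of_null
    (ae_iff.1 (ae_all_iff.2 fun i => ae_all_iff.2 (hνg i)))
  classical
  let D : ℝ → Matrix (Fin p) (Fin p) ℝ := fun x => if x ∈ N then 0 else ν.dens x
  have hD : ∀ᵐ x ∂ν.base, D x = ν.dens x := (measure_eq_zero_iff_ae_notMem.1 hN0).mono
    fun x hx => if_neg hx
  have hDij : ∀ i j, (fun x => D x i j) =ᵐ[ν.base] fun x => ν.dens x i j := fun i j =>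
    hD.mono fun x hx => congrFun (congrFun hx i) j
  refine ⟨{ ν with
      dens := D
      symm x := by by_cases hx : x ∈ N <;> simp [D, hx, ν.symm x]
      psd x := by by_cases hx : x ∈ N <;> simp [D, hx, ν.psd x, PosSemidef.zero]
      integrable i j := (ν.integrable i j).congr (hDij i j).symm
      normalized i j := by rw [integral_congr_ae (hDij i j), ν.normalized] }, fun i j => ?_,
    fun k => ?_⟩
  · have hDg : (fun x => D x i j) = N.piecewise 0 (g i j) := funext fun x => by
      by_cases hx : x ∈ N
      · simp [D, hx]
      · simp [D, hx, not_not.1 fun h => hx (hbad h)]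
    exact hDg ▸ measurable_const.piecewise hN (hg i j)
  · ext i j
    exact integral_congr_ae ((hDij i j).mono fun x hx => congrArg _ hx)

section SymmSqrt

variable {ρ : MatMeas p 0 1} (hρ : ∀ i j, Measurable fun x => ρ.dens x i j)
include hρ

lemma integral_map_sqrt_mul_dens_sq {f : ℝ → ℝ} (hf : Measurable f) (i j : Fin p) :
    ∫ x, f x * ρ.dens (x ^ 2) i j ∂ρ.base.map Real.sqrt = ∫ t, f √t * ρ.dens t i j ∂ρ.base :=
  (integral_map (f := fun x => f x * ρ.dens (x ^ 2) i j) (by fun_prop)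
    (hf.mul ((hρ i j).comp (by fun_prop))).aestronglyMeasurable).trans
    (integral_congr_ae (ρ.ae_mem_Icc.mono fun t ht => by simp only [Real.sq_sqrt ht.1]))

lemma integrable_half_dens_sq (i j : Fin p) :
    Integrable (fun x => ((1 / 2 : ℝ) • ρ.dens (x ^ 2)) i j)
      (ρ.base.map Real.sqrt + (ρ.base.map Real.sqrt).neg) := by
  have h : Integrable (fun x => (1 / 2 : ℝ) * ρ.dens (x ^ 2) i j) (ρ.base.map Real.sqrt) := by
    refine (integrable_map_measure
      (((hρ i j).comp (measurable_id.pow_const 2)).const_mul _).aestronglyMeasurable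
      Real.continuous_sqrt.aemeasurable).2 ?_
    exact ((ρ.integrable i j).const_mul (1 / 2)).congr
      (ρ.ae_mem_Icc.mono fun t ht => by simp only [Function.comp_apply, id, Real.sq_sqrt ht.1])
  simp only [Matrix.smul_apply, smul_eq_mul]
  exact integrable_add_measure.2 ⟨h, integrable_measure_neg_iff.2 (by simpa only [neg_sq])⟩

/-- The symmetric matrix measure on `[-1, 1]` whose image under `x ↦ x²` is `ρ`. -/
noncomputable def symmSqrt : MatMeas p (-1) 1 where
  base := ρ.base.map Real.sqrt + (ρ.base.map Real.sqrt).neg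
  dens x := (1 / 2 : ℝ) • ρ.dens (x ^ 2)
  finite := by have := ρ.finite; rw [Measure.neg_def]; infer_instance
  supp := by
    refine add_neg_measure_compl_Icc ?_
    rw [Measure.map_apply (by fun_prop) measurableSet_Icc.compl]
    exact measure_mono_null (fun t (ht : √t ∉ Icc (-1) 1) (hmem : t ∈ Icc 0 1) =>
      ht ⟨by linarith [Real.sqrt_nonneg t], Real.sqrt_le_one.2 hmem.2⟩) ρ.supp
  symm x := (ρ.symm _).smul _
  psd x := (ρ.psd _).smul (by norm_num)
  integrable := integrable_half_dens_sq hρ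
  normalized i j := by
    refine (integral_add_neg_measure (integrable_half_dens_sq hρ i j)).trans ?_
    refine .trans ?_ ((integral_map_sqrt_mul_dens_sq hρ (f := 1) measurable_const i j).trans
      (by simpa using ρ.normalized i j))
    congr 1 with x
    simp only [Matrix.smul_apply, smul_eq_mul, neg_sq, Pi.one_apply]
    ring

lemma mmoment_symmSqrt_apply (k : ℕ) (i j : Fin p) :
    mmoment (symmSqrt hρ) k i j =
      ∫ x, (x ^ k + (-x) ^ k) * ((1 / 2 : ℝ) * ρ.dens (x ^ 2) i j) ∂ρ.base.map Real.sqrt := by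
  refine (integral_add_neg_measure ((symmSqrt hρ).integrable_pow_mul_dens k i j)).trans ?_
  simp [symmSqrt, add_mul]

lemma mmoment_symmSqrt_two_mul (m : ℕ) : mmoment (symmSqrt hρ) (2 * m) = mmoment ρ m := by
  ext i j
  calc mmoment (symmSqrt hρ) (2 * m) i j
      = ∫ x, (x ^ 2) ^ m * ρ.dens (x ^ 2) i j ∂ρ.base.map Real.sqrt := by
        rw [mmoment_symmSqrt_apply]
        congr 1 with x
        rw [(even_two_mul m).neg_pow, pow_mul]
        ring
    _ = ∫ t, (√t ^ 2) ^ m * ρ.dens t i j ∂ρ.base :=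
        integral_map_sqrt_mul_dens_sq hρ (f := fun x => (x ^ 2) ^ m) (by fun_prop) i j
    _ = mmoment ρ m i j :=
        integral_congr_ae (ρ.ae_mem_Icc.mono fun t ht => by simp only [Real.sq_sqrt ht.1])

lemma mmoment_symmSqrt_of_odd {k : ℕ} (hk : Odd k) : mmoment (symmSqrt hρ) k = 0 := by
  ext i j
  simp [mmoment_symmSqrt_apply, hk.neg_pow]

end SymmSqrt

section MapSq

variable (ν : MatMeas p (-1) 1)

noncomputable def symmWeight (x : ℝ) : ℝ := (ν.base.rnDeriv (ν.base + ν.base.neg) x).toReal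

/-- An even density, with respect to `ν.base + ν.base.neg`, of the average of `ν` and its
reflection. -/
noncomputable def evenDens (x : ℝ) : Matrix (Fin p) (Fin p) ℝ :=
  (1 / 2 : ℝ) • (ν.symmWeight x • ν.dens x + ν.symmWeight (-x) • ν.dens (-x))

variable {ν}

lemma evenDens_neg (x : ℝ) : ν.evenDens (-x) = ν.evenDens x := by
  rw [evenDens, evenDens, neg_neg, add_comm]

lemma integral_symmWeight_mul {h : ℝ → ℝ} (hh : Integrable h ν.base) :
    Integrable (fun x => ν.symmWeight x * h x) (ν.base + ν.base.neg) ∧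
      ∫ x, ν.symmWeight x * h x ∂(ν.base + ν.base.neg) = ∫ x, h x ∂ν.base := by
  have := ν.finite
  have habs : ν.base ≪ ν.base + ν.base.neg :=
    Measure.absolutelyContinuous_of_le (Measure.le_add_right le_rfl)
  exact ⟨(integrable_toReal_rnDeriv_mul_iff habs).2 hh, integral_toReal_rnDeriv_mul habs⟩

lemma integral_mul_evenDens {g : ℝ → ℝ} (hg_even : ∀ x, g (-x) = g x)
    (hg : ∀ i j, Integrable (fun x => g x * ν.dens x i j) ν.base) (i j : Fin p) :
    Integrable (fun x => g x * ν.evenDens x i j) (ν.base + ν.base.neg) ∧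
      ∫ x, g x * ν.evenDens x i j ∂(ν.base + ν.base.neg) = ∫ x, g x * ν.dens x i j ∂ν.base := by
  obtain ⟨hF, hF_int⟩ := integral_symmWeight_mul (hg i j)
  set F := fun x => ν.symmWeight x * (g x * ν.dens x i j)
  have hsplit : ∀ x, g x * ν.evenDens x i j = 1 / 2 * (F x + F (-x)) := fun x => by
    simp only [F, evenDens, Matrix.smul_apply, Matrix.add_apply, smul_eq_mul, hg_even]
    ring
  simp only [hsplit]
  refine ⟨((hF.add hF.comp_neg).const_mul _), ?_⟩
  rw [integral_const_mul, integral_add hF hF.comp_neg, integral_neg_eq_self, hF_int]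
  ring

lemma measurable_evenDens_apply (hν : ∀ i j, Measurable fun x => ν.dens x i j) (i j : Fin p) :
    Measurable fun x => ν.evenDens x i j := by
  have hw : Measurable ν.symmWeight := (Measure.measurable_rnDeriv _ _).ennreal_toReal
  simp only [evenDens, Matrix.smul_apply, Matrix.add_apply, smul_eq_mul]
  exact ((hw.mul (hν i j)).add
    ((hw.comp measurable_neg).mul ((hν i j).comp measurable_neg))).const_mul _

variable (hν : ∀ i j, Measurable fun x => ν.dens x i j)
include hν

lemma integral_map_sq_pow_mul_evenDens_sqrt (m : ℕ) (i j : Fin p) :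
    Integrable (fun y => y ^ m * ν.evenDens √y i j) ((ν.base + ν.base.neg).map (· ^ 2)) ∧
      ∫ y, y ^ m * ν.evenDens √y i j ∂(ν.base + ν.base.neg).map (· ^ 2) =
        mmoment ν (2 * m) i j := by
  have hmeas : Measurable fun y => y ^ m * ν.evenDens √y i j :=
    (measurable_id.pow_const m).mul ((measurable_evenDens_apply hν i j).comp (by fun_prop))
  have hcomp : ∀ x : ℝ, (x ^ 2) ^ m * ν.evenDens √(x ^ 2) i j = x ^ (2 * m) * ν.evenDens x i j :=
    fun x => by
      rw [Real.sqrt_sq_eq_abs, pow_mul]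
      rcases abs_choice x with h | h <;> simp only [h, evenDens_neg]
  obtain ⟨hint, heq⟩ := integral_mul_evenDens (fun x => (even_two_mul m).neg_pow x)
    (ν.integrable_pow_mul_dens (2 * m)) i j
  refine ⟨(integrable_map_measure hmeas.aestronglyMeasurable (by fun_prop)).2 ?_, ?_⟩
  · exact hint.congr (.of_forall fun x => (hcomp x).symm)
  · rw [integral_map (by fun_prop) hmeas.aestronglyMeasurable]
    simp only [hcomp]
    exact heq

/-- The image of `ν` under `x ↦ x²`; `evenDens` is even, so it is a function of `x²`. -/
noncomputable def mapSq : MatMeas p 0 1 where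
  base := (ν.base + ν.base.neg).map (· ^ 2)
  dens y := ν.evenDens √y
  finite := by have := ν.finite; rw [Measure.neg_def]; infer_instance
  supp := by
    rw [Measure.map_apply (by fun_prop) measurableSet_Icc.compl]
    exact measure_mono_null (fun x (hx : x ^ 2 ∉ Icc 0 1) (hmem : x ∈ Icc (-1) 1) =>
      hx ⟨sq_nonneg x, sq_le_one_iff_abs_le_one x |>.2 (abs_le.2 hmem)⟩)
      (add_neg_measure_compl_Icc ν.supp)
  symm _ := (((ν.symm _).smul _).add ((ν.symm _).smul _)).smul _
  psd _ := (((ν.psd _).smul ENNReal.toReal_nonneg).add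
    ((ν.psd _).smul ENNReal.toReal_nonneg)).smul (by norm_num)
  integrable i j := by simpa using (integral_map_sq_pow_mul_evenDens_sqrt hν 0 i j).1
  normalized i j := by
    simpa [mmoment, ν.normalized] using (integral_map_sq_pow_mul_evenDens_sqrt hν 0 i j).2

lemma mmoment_mapSq (m : ℕ) : mmoment (mapSq hν) m = mmoment ν (2 * m) := by
  ext i j
  exact (integral_map_sq_pow_mul_evenDens_sqrt hν m i j).2

end MapSq

theorem exists_mmoment_two_mul_eq_and_odd_eq_zero (ρ : MatMeas p 0 1) :
    ∃ ν : MatMeas p (-1) 1,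
      (∀ m, mmoment ν (2 * m) = mmoment ρ m) ∧ ∀ k, Odd k → mmoment ν k = 0 := by
  obtain ⟨ρ', hρ', hmom⟩ := ρ.exists_measurable_dens
  exact ⟨symmSqrt hρ', fun m => (mmoment_symmSqrt_two_mul hρ' m).trans (hmom m),
    fun _ => mmoment_symmSqrt_of_odd hρ'⟩

theorem exists_mmoment_eq_two_mul (ν : MatMeas p (-1) 1) :
    ∃ κ : MatMeas p 0 1, ∀ m, mmoment κ m = mmoment ν (2 * m) := by
  obtain ⟨ν', hν', hmom⟩ := ν.exists_measurable_dens
  exact ⟨mapSq hν', fun m => (mmoment_mapSq hν' m).trans (hmom _)⟩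

theorem kthMomentSet_two_mul {S S' : ℕ → Matrix (Fin p) (Fin p) ℝ}
    (heven : ∀ m, S' (2 * m) = S m) (hodd : ∀ j, Odd j → S' j = 0) (n : ℕ) :
    kthMomentSet p (-1) 1 (2 * n) S' = kthMomentSet p 0 1 n S := by
  ext T
  constructor
  · rintro ⟨ν, hmom, rfl⟩
    obtain ⟨κ, hκ⟩ := exists_mmoment_eq_two_mul ν
    exact ⟨κ, fun j hj1 hjn => by rw [hκ, hmom _ (by omega) (by omega), heven], hκ n⟩
  · rintro ⟨ρ, hmom, rfl⟩
    obtain ⟨ν, hνeven, hνodd⟩ := exists_mmoment_two_mul_eq_and_odd_eq_zero ρ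
    refine ⟨ν, fun j hj1 hjn => ?_, hνeven n⟩
    obtain ⟨m, rfl | rfl⟩ := j.even_or_odd'
    · rw [hνeven, hmom m (by omega) (by omega), heven]
    · rw [hνodd _ (odd_two_mul_add_one m), hodd _ (odd_two_mul_add_one m)]

end MatMeas

theorem canonical_moments_of_symmetrized_general (p n : ℕ) (hn : 1 ≤ n)
    (μ : MatMeas p 0 1) (σ : MatMeas p (-1) 1)
    (hsymm : ∀ A : Set ℝ, MeasurableSet A →
      mmOf σ ((fun x : ℝ => -x) ⁻¹' A) = mmOf σ A)
    (hpush : ∀ A : Set ℝ, MeasurableSet A →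
      mmOf σ ((fun t : ℝ => t ^ 2) ⁻¹' A) = mmOf μ A)
    (Omin Omax : Matrix (Fin p) (Fin p) ℝ)
    (hOminMem : Omin ∈ kthMomentSet p (-1) 1 (2 * n - 1) (fun j => mmoment σ j))
    (hOminLe : ∀ T ∈ kthMomentSet p (-1) 1 (2 * n - 1) (fun j => mmoment σ j),
      (T - Omin).PosSemidef)
    (hOmaxMem : Omax ∈ kthMomentSet p (-1) 1 (2 * n - 1) (fun j => mmoment σ j))
    (hOmaxGe : ∀ T ∈ kthMomentSet p (-1) 1 (2 * n - 1) (fun j => mmoment σ j),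
      (Omax - T).PosSemidef)
    (Emin Emax : Matrix (Fin p) (Fin p) ℝ)
    (hEminMem : Emin ∈ kthMomentSet p (-1) 1 (2 * n) (fun j => mmoment σ j))
    (hEminLe : ∀ T ∈ kthMomentSet p (-1) 1 (2 * n) (fun j => mmoment σ j),
      (T - Emin).PosSemidef)
    (hEmaxMem : Emax ∈ kthMomentSet p (-1) 1 (2 * n) (fun j => mmoment σ j))
    (hEmaxGe : ∀ T ∈ kthMomentSet p (-1) 1 (2 * n) (fun j => mmoment σ j),
      (Emax - T).PosSemidef)
    (Smin Smax : Matrix (Fin p) (Fin p) ℝ)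
    (hSminMem : Smin ∈ kthMomentSet p 0 1 n (fun j => mmoment μ j))
    (hSminLe : ∀ T ∈ kthMomentSet p 0 1 n (fun j => mmoment μ j), (T - Smin).PosSemidef)
    (hSmaxMem : Smax ∈ kthMomentSet p 0 1 n (fun j => mmoment μ j))
    (hSmaxGe : ∀ T ∈ kthMomentSet p 0 1 n (fun j => mmoment μ j), (Smax - T).PosSemidef)
    (R : Matrix (Fin p) (Fin p) ℝ) (hRpd : R.PosDef)
    (hRR : R * R = Omax - Omin)
    (R' : Matrix (Fin p) (Fin p) ℝ) (hR'pd : R'.PosDef)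
    (hR'R' : R' * R' = Emax - Emin)
    (Q : Matrix (Fin p) (Fin p) ℝ) (hQpd : Q.PosDef)
    (hQQ : Q * Q = Smax - Smin) :
    (mmoment σ (2 * n) = mmoment μ n) ∧
    (mmoment σ (2 * n - 1) = 0) ∧
    (R⁻¹ * (mmoment σ (2 * n - 1) - Omin) * R⁻¹ =
      (1 / 2 : ℝ) • (1 : Matrix (Fin p) (Fin p) ℝ)) ∧
    (R'⁻¹ * (mmoment σ (2 * n) - Emin) * R'⁻¹ =
      Q⁻¹ * (mmoment μ n - Smin) * Q⁻¹) := by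
  have heven := MatMeas.mmoment_two_mul_of_mmOf_preimage_sq hpush
  have hodd : ∀ k, Odd k → mmoment σ k = 0 := fun _ => MatMeas.mmoment_eq_zero_of_odd hsymm
  have hodd_n : Odd (2 * n - 1) := ⟨n - 1, by omega⟩
  have hOmin : Omin = -Omax :=
    IsLeast.eq_neg_of_isGreatest (fun _ => MatMeas.neg_mem_kthMomentSet hodd_n hodd)
      ⟨hOminMem, fun T hT => le_iff.2 (hOminLe T hT)⟩
      ⟨hOmaxMem, fun T hT => le_iff.2 (hOmaxGe T hT)⟩
  rw [MatMeas.kthMomentSet_two_mul heven hodd n] at hEminMem hEminLe hEmaxMem hEmaxGe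
  have hEmin : Emin = Smin := IsLeast.unique ⟨hEminMem, fun T hT => le_iff.2 (hEminLe T hT)⟩
    ⟨hSminMem, fun T hT => le_iff.2 (hSminLe T hT)⟩
  have hEmax : Emax = Smax := IsGreatest.unique ⟨hEmaxMem, fun T hT => le_iff.2 (hEmaxGe T hT)⟩
    ⟨hSmaxMem, fun T hT => le_iff.2 (hSmaxGe T hT)⟩
  have hR'Q : R' = Q := (CFC.sq_eq_sq_iff R' Q hR'pd.posSemidef.nonneg hQpd.posSemidef.nonneg).1
    (by rw [sq, sq, hR'R', hQQ, hEmin, hEmax])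
  refine ⟨heven n, hodd _ hodd_n, ?_, by rw [heven n, hEmin, hR'Q]⟩
  rw [hodd _ hodd_n, zero_sub, hOmin, neg_neg]
  exact Matrix.inv_mul_mul_inv_eq_half_of_mul_self hRpd.isUnit (by rw [hRR, hOmin, sub_neg_eq_add])

/-- If `σ` is the symmetric matrix measure on `[-1,1]` induced from a matrix
measure `μ` on `[0,1]` via `σ([-x,x]) = μ([0,x²])` (i.e. `σ` is invariant under
`x ↦ -x` and its pushforward under `t ↦ t²` is `μ`), then the moments satisfy
`S^σ_{2n} = S^μ_n` and `S^σ_{2n-1} = 0`, and the canonical moments satisfy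
`U^σ_{2n-1} = (1/2) I_p` and `U^σ_{2n} = U^μ_n`, whenever defined.  The
matrices `Omin, Omax` are the extremal `(2n-1)`-st moments of `σ`,
`Emin, Emax` the extremal `2n`-th moments of `σ`, and `Smin, Smax` the extremal
`n`-th moments of `μ`, all given the respective previous moments; `R`, `R'`
are the symmetric positive definite square roots of `Omax - Omin` and
`Emax - Emin`, and `Q` that of `Smax - Smin`. -/
theorem canonical_moments_of_symmetrized (p n : ℕ) (hp : 0 < p) (hn : 1 ≤ n)
    (μ : MatMeas p 0 1) (σ : MatMeas p (-1) 1)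
    (hsymm : ∀ A : Set ℝ, MeasurableSet A →
      mmOf σ ((fun x : ℝ => -x) ⁻¹' A) = mmOf σ A)
    (hpush : ∀ A : Set ℝ, MeasurableSet A →
      mmOf σ ((fun t : ℝ => t ^ 2) ⁻¹' A) = mmOf μ A)
    (Omin Omax : Matrix (Fin p) (Fin p) ℝ)
    (hOminMem : Omin ∈ kthMomentSet p (-1) 1 (2 * n - 1) (fun j => mmoment σ j))
    (hOminLe : ∀ T ∈ kthMomentSet p (-1) 1 (2 * n - 1) (fun j => mmoment σ j),
      (T - Omin).PosSemidef)
    (hOmaxMem : Omax ∈ kthMomentSet p (-1) 1 (2 * n - 1) (fun j => mmoment σ j))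
    (hOmaxGe : ∀ T ∈ kthMomentSet p (-1) 1 (2 * n - 1) (fun j => mmoment σ j),
      (Omax - T).PosSemidef)
    (Emin Emax : Matrix (Fin p) (Fin p) ℝ)
    (hEminMem : Emin ∈ kthMomentSet p (-1) 1 (2 * n) (fun j => mmoment σ j))
    (hEminLe : ∀ T ∈ kthMomentSet p (-1) 1 (2 * n) (fun j => mmoment σ j),
      (T - Emin).PosSemidef)
    (hEmaxMem : Emax ∈ kthMomentSet p (-1) 1 (2 * n) (fun j => mmoment σ j))
    (hEmaxGe : ∀ T ∈ kthMomentSet p (-1) 1 (2 * n) (fun j => mmoment σ j),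
      (Emax - T).PosSemidef)
    (Smin Smax : Matrix (Fin p) (Fin p) ℝ)
    (hSminMem : Smin ∈ kthMomentSet p 0 1 n (fun j => mmoment μ j))
    (hSminLe : ∀ T ∈ kthMomentSet p 0 1 n (fun j => mmoment μ j), (T - Smin).PosSemidef)
    (hSmaxMem : Smax ∈ kthMomentSet p 0 1 n (fun j => mmoment μ j))
    (hSmaxGe : ∀ T ∈ kthMomentSet p 0 1 n (fun j => mmoment μ j), (Smax - T).PosSemidef)
    (hDO : (Omax - Omin).PosDef) (hDE : (Emax - Emin).PosDef) (hDS : (Smax - Smin).PosDef)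
    (R : Matrix (Fin p) (Fin p) ℝ) (hRsymm : R.IsSymm) (hRpd : R.PosDef)
    (hRR : R * R = Omax - Omin)
    (R' : Matrix (Fin p) (Fin p) ℝ) (hR'symm : R'.IsSymm) (hR'pd : R'.PosDef)
    (hR'R' : R' * R' = Emax - Emin)
    (Q : Matrix (Fin p) (Fin p) ℝ) (hQsymm : Q.IsSymm) (hQpd : Q.PosDef)
    (hQQ : Q * Q = Smax - Smin) :
    (mmoment σ (2 * n) = mmoment μ n) ∧
    (mmoment σ (2 * n - 1) = 0) ∧
    (R⁻¹ * (mmoment σ (2 * n - 1) - Omin) * R⁻¹ =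
      (1 / 2 : ℝ) • (1 : Matrix (Fin p) (Fin p) ℝ)) ∧
    (R'⁻¹ * (mmoment σ (2 * n) - Emin) * R'⁻¹ =
      Q⁻¹ * (mmoment μ n - Smin) * Q⁻¹) :=
  canonical_moments_of_symmetrized_general p n hn μ σ hsymm hpush Omin Omax hOminMem hOminLe
    hOmaxMem hOmaxGe Emin Emax hEminMem hEminLe hEmaxMem hEmaxGe Smin Smax hSminMem hSminLe hSmaxMem
    hSmaxGe R hRpd hRR R' hR'pd hR'R' Q hQpd hQQ
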